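/- arXiv:1104.3161 — 2 statements merged into one kernel-verified Lean document; each statement's English description precedes it below -/
import Mathlib

section
/- For two n×n positive semidefinite Hermitian matrices A and B with eigenvalues λ_1(A) ≥ … ≥ λ_n(A) and λ_1(B) ≥ … ≥ λ_n(B) arranged in non-increasing order, tr(AB) ≥ Σ_{i=1}^n λ_i(A) λ_{n-i+1}(B). -/
open Matrix
open scoped ComplexOrder

/-- Rearrangement: for antitone `μ, ν`, the reversed pairing minimizes over permutations. -/
lemma rev_pairing_min {n : ℕ} (μ ν : Fin n → ℝ) (hμa : Antitone μ) (hνa : Antitone ν)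
    (π : Equiv.Perm (Fin n)) :
    ∑ i : Fin n, μ i * ν i.rev ≤ ∑ i : Fin n, μ i * ν (π i) := by
  set g : Fin n → ℝ := ν ∘ Fin.rev with hg
  have hgm : Monotone g := fun i j hij => hνa (Fin.rev_le_rev.2 hij)
  have hav : Antivary μ g := by
    intro i j h
    rcases le_total i j with hij | hij
    · exact hμa hij
    · exact absurd (hgm hij) (not_le.2 h)
  have := hav.sum_mul_le_sum_mul_comp_perm (σ := π.trans (Fin.revPerm))
  simpa [g, Function.comp, Fin.rev_rev] using this

/-- Lower bound for bilinear form over doubly stochastic matrices. -/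
lemma ds_lower {n : ℕ} (μ ν : Fin n → ℝ) (hμa : Antitone μ) (hνa : Antitone ν)
    (d : Matrix (Fin n) (Fin n) ℝ) (hd : d ∈ doublyStochastic ℝ (Fin n)) :
    ∑ i : Fin n, μ i * ν i.rev ≤ ∑ i : Fin n, ∑ j : Fin n, d i j * (μ i * ν j) := by
  obtain ⟨w, hw0, hw1, hwd⟩ := exists_eq_sum_perm_of_mem_doublyStochastic hd
  have key : ∀ π : Equiv.Perm (Fin n),
      ∑ i : Fin n, ∑ j : Fin n, (π.permMatrix ℝ) i j * (μ i * ν j)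
        = ∑ i : Fin n, μ i * ν (π i) := by
    intro π
    refine Finset.sum_congr rfl fun i _ => ?_
    simp [Equiv.Perm.permMatrix, PEquiv.toMatrix_apply, Equiv.toPEquiv_apply, ite_mul,
      Option.mem_def, eq_comm]
  calc ∑ i : Fin n, μ i * ν i.rev
      = ∑ π : Equiv.Perm (Fin n), w π * ∑ i : Fin n, μ i * ν i.rev := by
        rw [← Finset.sum_mul, hw1, one_mul]
    _ ≤ ∑ π : Equiv.Perm (Fin n), w π * ∑ i : Fin n, μ i * ν (π i) := by
        refine Finset.sum_le_sum fun π _ => ?_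
        exact mul_le_mul_of_nonneg_left (rev_pairing_min μ ν hμa hνa π) (hw0 π)
    _ = ∑ i : Fin n, ∑ j : Fin n, d i j * (μ i * ν j) := by
        rw [← hwd]
        simp only [← key, Matrix.sum_apply, Finset.sum_apply, Matrix.smul_apply, smul_eq_mul, Finset.sum_mul,
          Finset.mul_sum, mul_assoc]
        rw [Finset.sum_comm]
        refine Finset.sum_congr rfl fun i _ => ?_
        exact Finset.sum_comm (f := fun π j => w π * (Equiv.Perm.permMatrix ℝ π i j * (μ i * ν j)))

/-- Marshall–Olkin trace inequality (Lemma 4): for PSD Hermitian `A, B` with eigenvalues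
listed in non-increasing order `μ` and `ν` (obtained from the spectra via permutations),
`tr (A B) ≥ ∑ i, μ i * ν (n - i + 1)`. -/
theorem stmt2 (n : ℕ) (A B : Matrix (Fin n) (Fin n) ℂ)
    (hA : A.PosSemidef) (hB : B.PosSemidef)
    (μ ν : Fin n → ℝ) (σ τ : Equiv.Perm (Fin n))
    (hμ : μ = hA.isHermitian.eigenvalues ∘ σ)
    (hν : ν = hB.isHermitian.eigenvalues ∘ τ)
    (hμa : Antitone μ) (hνa : Antitone ν) :
    ∑ i : Fin n, μ i * ν i.rev ≤ (A * B).trace.re := by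

  classical
  set a := hA.isHermitian.eigenvalues with ha
  set b := hB.isHermitian.eigenvalues with hb
  set U : Matrix.unitaryGroup (Fin n) ℂ := hA.isHermitian.eigenvectorUnitary with hU
  set V : Matrix.unitaryGroup (Fin n) ℂ := hB.isHermitian.eigenvectorUnitary with hV
  set M : Matrix (Fin n) (Fin n) ℂ := star (U : Matrix (Fin n) (Fin n) ℂ) * V with hM
  have hMu : M ∈ Matrix.unitaryGroup (Fin n) ℂ := mul_mem (Unitary.star_mem U.2) V.2
  -- trace computation
  have htr : (A * B).trace
      = (diagonal (RCLike.ofReal ∘ a) * (M * diagonal (RCLike.ofReal ∘ b) * star M)).trace := by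
    have h1 : A * B = (U : Matrix (Fin n) (Fin n) ℂ)
        * (diagonal (RCLike.ofReal ∘ a) * (M * diagonal (RCLike.ofReal ∘ b) * star M))
        * star (U : Matrix (Fin n) (Fin n) ℂ) := by
      rw [hA.isHermitian.spectral_theorem, hB.isHermitian.spectral_theorem]
      simp only [Unitary.conjStarAlgAut_apply, ← hU, ← hV, ← ha, ← hb, hM, Matrix.star_mul, star_star, Matrix.mul_assoc]
      rw [Matrix.mem_unitaryGroup_iff.mp U.2, Matrix.mul_one]
    rw [h1, Matrix.trace_mul_cycle, ← Matrix.mul_assoc,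
      Matrix.mem_unitaryGroup_iff'.mp U.2, Matrix.one_mul]
  have hre : (diagonal (RCLike.ofReal ∘ a) * (M * diagonal (RCLike.ofReal ∘ b) * star M)).trace.re
      = ∑ i : Fin n, ∑ j : Fin n, Complex.normSq (M i j) * (a i * b j) := by
    rw [Matrix.trace, Complex.re_sum]
    refine Finset.sum_congr rfl fun i _ => ?_
    have key : (diagonal (RCLike.ofReal ∘ a) * (M * diagonal (RCLike.ofReal ∘ b) * star M)).diag i
        = ∑ j : Fin n, ((Complex.normSq (M i j) * (a i * b j) : ℝ) : ℂ) := by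
      rw [Matrix.diag_apply, Matrix.diagonal_mul, Matrix.mul_apply, Finset.mul_sum]
      refine Finset.sum_congr rfl fun j _ => ?_
      rw [Matrix.mul_diagonal, Matrix.star_apply, mul_right_comm (M i j)]
      simp only [Function.comp_apply, Complex.star_def, Complex.mul_conj]
      rw [show ((RCLike.ofReal : ℝ → ℂ) = Complex.ofReal) from rfl]
      push_cast
      ring
    rw [key, Complex.re_sum]
    simp
  -- the doubly stochastic matrix of squared overlaps
  have hrow : ∀ i0 : Fin n, ∑ j : Fin n, Complex.normSq (M i0 j) = 1 := by
    intro i0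
    have h : (M * star M) i0 i0 = 1 := by
      rw [Matrix.mem_unitaryGroup_iff.mp hMu]; simp [Matrix.one_apply]
    rw [Matrix.mul_apply] at h
    have h2 : ∑ j : Fin n, ((Complex.normSq (M i0 j) : ℝ) : ℂ) = 1 := by
      rw [← h]
      refine Finset.sum_congr rfl fun j _ => ?_
      rw [Matrix.star_apply, Complex.star_def, Complex.mul_conj]
    have h3 := congrArg Complex.re h2
    simpa [Complex.re_sum] using h3
  have hcol : ∀ j0 : Fin n, ∑ i : Fin n, Complex.normSq (M i j0) = 1 := by
    intro j0
    have h : (star M * M) j0 j0 = 1 := by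
      rw [Matrix.mem_unitaryGroup_iff'.mp hMu]; simp [Matrix.one_apply]
    rw [Matrix.mul_apply] at h
    have h2 : ∑ i : Fin n, ((Complex.normSq (M i j0) : ℝ) : ℂ) = 1 := by
      rw [← h]
      refine Finset.sum_congr rfl fun i _ => ?_
      rw [Matrix.star_apply, Complex.star_def, mul_comm, Complex.mul_conj]
    have h3 := congrArg Complex.re h2
    simpa [Complex.re_sum] using h3
  set D : Matrix (Fin n) (Fin n) ℝ :=
    Matrix.of fun i j => Complex.normSq (M (σ i) (τ j)) with hD
  have hDds : D ∈ doublyStochastic ℝ (Fin n) := by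
    rw [mem_doublyStochastic_iff_sum]
    refine ⟨fun i j => Complex.normSq_nonneg _, fun i => ?_, fun j => ?_⟩
    · rw [show ∑ j : Fin n, D i j = ∑ j : Fin n, Complex.normSq (M (σ i) (τ j)) from rfl,
        Equiv.sum_comp τ (fun j => Complex.normSq (M (σ i) j))]
      exact hrow (σ i)
    · rw [show ∑ i : Fin n, D i j = ∑ i : Fin n, Complex.normSq (M (σ i) (τ j)) from rfl,
        Equiv.sum_comp σ (fun i => Complex.normSq (M i (τ j)))]
      exact hcol (τ j)
  calc ∑ i : Fin n, μ i * ν i.rev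
      ≤ ∑ i : Fin n, ∑ j : Fin n, D i j * (μ i * ν j) := ds_lower μ ν hμa hνa D hDds
    _ = ∑ i : Fin n, ∑ j : Fin n, Complex.normSq (M (σ i) (τ j)) * (a (σ i) * b (τ j)) := by
        subst hμ hν; rfl
    _ = ∑ i : Fin n, ∑ j : Fin n, Complex.normSq (M (σ i) j) * (a (σ i) * b j) :=
        Finset.sum_congr rfl fun i _ =>
          Equiv.sum_comp τ (fun j => Complex.normSq (M (σ i) j) * (a (σ i) * b j))
    _ = ∑ i : Fin n, ∑ j : Fin n, Complex.normSq (M i j) * (a i * b j) :=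
        Equiv.sum_comp σ (fun i => ∑ j : Fin n, Complex.normSq (M i j) * (a i * b j))
    _ = (A * B).trace.re := by rw [htr, hre]
end

section
/- Let Q be an n×n Hermitian positive semidefinite matrix and λ ≥ 0 with λI − Q ⪰ 0. Then for e* = h̃ Q (λI − Q)^† (assuming Q h̃^H ∈ 𝓡(λI − Q)), the quadratic (h̃+e*) Q (h̃+e*)^H ≥ (h̃+e) Q (h̃+e)^H for all e with ‖e‖² ≤ ε², provided ‖e*‖² ≤ ε² and the complementary slackness λ(‖e*‖² − ε²) = 0 holds. -/
open Matrix
open scoped ComplexOrder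

/-- KKT sufficiency for the trust-region subproblem (Proposition 2): if `λ ≥ 0`,
`λI − Q ⪰ 0`, `e* = h̃ Q (λI − Q)^†` is feasible (`‖e*‖² ≤ ε²`) and complementary
slackness `λ(‖e*‖² − ε²) = 0` holds, then `e*` is a global maximizer of
`(h̃+e) Q (h̃+e)ᴴ` over `‖e‖² ≤ ε²`. -/
theorem stmt16 (n : ℕ) (Q : Matrix (Fin n) (Fin n) ℂ) (hQ : Q.PosSemidef)
    (h : Fin n → ℂ) (ε : ℝ) (hε : 0 < ε) (lam : ℝ) (hlam : 0 ≤ lam)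
    (hM : (((lam : ℂ) • (1 : Matrix (Fin n) (Fin n) ℂ) - Q)).PosSemidef)
    (hrange : ∃ x : Fin n → ℂ,
      ((lam : ℂ) • (1 : Matrix (Fin n) (Fin n) ℂ) - Q) *ᵥ x = Q *ᵥ star h)
    (P : Matrix (Fin n) (Fin n) ℂ)
    (hP1 : ((lam : ℂ) • 1 - Q) * P * ((lam : ℂ) • 1 - Q) = (lam : ℂ) • 1 - Q)
    (hP2 : P * ((lam : ℂ) • 1 - Q) * P = P)
    (hP3 : (((lam : ℂ) • 1 - Q) * P)ᴴ = ((lam : ℂ) • 1 - Q) * P)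
    (hP4 : (P * ((lam : ℂ) • 1 - Q))ᴴ = P * ((lam : ℂ) • 1 - Q))
    (estar : Fin n → ℂ) (hestar : estar = h ᵥ* (Q * P))
    (hfeas : (∑ i, ‖estar i‖ ^ 2) ≤ ε ^ 2)
    (hcs : lam * ((∑ i, ‖estar i‖ ^ 2) - ε ^ 2) = 0) :
    ∀ e : Fin n → ℂ, (∑ i, ‖e i‖ ^ 2) ≤ ε ^ 2 →
      ((h + e) ⬝ᵥ Q *ᵥ star (h + e)).re ≤
        ((h + estar) ⬝ᵥ Q *ᵥ star (h + estar)).re := by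
  intro e hfe
  set M : Matrix (Fin n) (Fin n) ℂ := (lam : ℂ) • 1 - Q with hMdef
  obtain ⟨x, hx⟩ := hrange
  have hQH : Qᴴ = Q := hQ.1
  have hMH : Mᴴ = M := hM.1
  -- M Pᴴ M = M
  have hP1' : M * Pᴴ * M = M := by
    have := congrArg conjTranspose hP1
    simpa [conjTranspose_mul, hMH, Matrix.mul_assoc] using this
  -- key : M *ᵥ star estar = Q *ᵥ star h
  have key : M *ᵥ star estar = Q *ᵥ star h := by
    rw [hestar, star_vecMul, conjTranspose_mul, hQH, ← mulVec_mulVec,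
      ← hx, mulVec_mulVec, mulVec_mulVec, hP1', hx]
  have key2 : h ᵥ* Q = estar ᵥ* M := by
    have := congrArg star key
    simpa [star_mulVec, hMH, hQH] using this.symm
  have rel1 : ∀ v : Fin n → ℂ, v ⬝ᵥ (Q *ᵥ star h)
      = (lam : ℂ) * (v ⬝ᵥ star estar) - v ⬝ᵥ (Q *ᵥ star estar) := by
    intro v
    rw [← key, hMdef, sub_mulVec, smul_mulVec, one_mulVec, dotProduct_sub,
      dotProduct_smul, smul_eq_mul]
  have rel2 : ∀ w : Fin n → ℂ, h ⬝ᵥ (Q *ᵥ w)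
      = (lam : ℂ) * (estar ⬝ᵥ w) - estar ⬝ᵥ (Q *ᵥ w) := by
    intro w
    rw [dotProduct_mulVec, key2, ← dotProduct_mulVec, hMdef, sub_mulVec,
      smul_mulVec, one_mulVec, dotProduct_sub, dotProduct_smul, smul_eq_mul]
  have ident : ((h + estar) ⬝ᵥ Q *ᵥ star (h + estar)) - ((h + e) ⬝ᵥ Q *ᵥ star (h + e))
      = ((e - estar) ⬝ᵥ M *ᵥ (star e - star estar))
        + (lam : ℂ) * ((estar ⬝ᵥ star estar) - (e ⬝ᵥ star e)) := by
    simp only [star_add, mulVec_add, dotProduct_add, add_dotProduct, sub_dotProduct,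
      mulVec_sub, dotProduct_sub, rel2, rel1, hMdef, sub_mulVec, smul_mulVec,
      one_mulVec, dotProduct_smul, smul_eq_mul]
    ring
  have hre : ∀ v : Fin n → ℂ, (v ⬝ᵥ star v).re = ∑ i, ‖v i‖ ^ 2 := by
    intro v
    rw [dotProduct, Complex.re_sum]
    congr 1; funext i
    rw [Pi.star_apply, Complex.star_def, Complex.mul_conj]
    simp [Complex.normSq_eq_norm_sq, ← Complex.ofReal_pow]
  have hpsd : 0 ≤ (((e - estar) ⬝ᵥ M *ᵥ (star e - star estar))).re := by
    have h0 := hM.dotProduct_mulVec_nonneg (star (e - estar))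
    rw [star_star] at h0
    rw [show (star e - star estar : Fin n → ℂ) = star (e - estar) by simp]
    simpa using (Complex.le_def.mp h0).1
  have hident := congrArg Complex.re ident
  rw [Complex.sub_re, Complex.add_re, Complex.mul_re] at hident
  simp only [Complex.ofReal_re, Complex.ofReal_im, Complex.sub_re, hre, zero_mul,
    sub_zero] at hident
  have hq : 0 ≤ lam * (ε ^ 2 - ∑ i, ‖e i‖ ^ 2) :=
    mul_nonneg hlam (by linarith)
  linarith
end
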